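/- arXiv:1909.09333 — 5 statements merged into one kernel-verified Lean document; each statement's English description precedes it below -/
import Mathlib

section
/- Let (G_α)_{α ∈ Ord} be a sequence of graphs such that for all α < α' there is no homomorphism from G_α to G_{α'}, and define H_β = ∏_{α < β} G_{α+1}. Suppose additionally that for all α ≤ α' there is a homomorphism from G_{α'} to G_α. Then for all β < β' there is no graph homomorphism from H_β to H_{β'}. -/
open Ordinal

/-- A graph homomorphism is an edge-preserving map. -/
def IsGraphHom {G G' : Type*} (E : G → G → Prop) (E' : G' → G' → Prop)
    (h : G → G') : Prop :=
  ∀ v w, E v w → E' (h v) (h w)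

/-- If `(G_α)` is an `Ord`-sequence of graphs with homomorphisms
`G_{α'} → G_α` for `α ≤ α'` and no homomorphisms `G_α → G_{α'}` for
`α < α'`, then setting `H_β = ∏_{α < β} G_{α+1}` there is no homomorphism
`H_β → H_{β'}` for `β < β'`. -/
theorem no_forward_hom_of_products
    (G : Ordinal → Type) (E : ∀ α, G α → G α → Prop)
    (hback : ∀ α α' : Ordinal, α ≤ α' →
      ∃ h : G α' → G α, IsGraphHom (E α') (E α) h)
    (hno : ∀ α α' : Ordinal, α < α' →
      ¬ ∃ h : G α → G α', IsGraphHom (E α) (E α') h)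
    (β β' : Ordinal) (hββ' : β < β') :
    ¬ ∃ h : (∀ α : {α : Ordinal // α < β}, G (α.1 + 1)) →
        (∀ α : {α : Ordinal // α < β'}, G (α.1 + 1)),
      IsGraphHom
        (fun f g => ∀ α : {α : Ordinal // α < β}, E (α.1 + 1) (f α) (g α))
        (fun f g => ∀ α : {α : Ordinal // α < β'}, E (α.1 + 1) (f α) (g α))
        h := by
  rintro ⟨h, hh⟩
  -- choose backward homs G β → G (α+1) for α < β
  choose φ hφ using fun α : {α : Ordinal // α < β} =>
    hback (α.1 + 1) β (Order.add_one_le_of_lt α.2)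
  -- The composite map G β → G (β+1)
  refine hno β (β + 1) (lt_add_one β) ⟨fun v => h (fun α => φ α v) ⟨β, hββ'⟩, ?_⟩
  intro v w hvw
  exact hh (fun α => φ α v) (fun α => φ α w) (fun α => hφ α v w hvw) ⟨β, hββ'⟩
end

section
/- Let κ be a regular cardinal and let (G_α)_{α < κ} be a sequence of graphs such that for all α ≤ α' < κ there is a homomorphism from G_{α'} to G_α. If there exist a set I₀ ⊆ κ of cardinality less than κ and a graph homomorphism from ∏_{α ∈ I₀} G_α to ∏_{α < κ} G_α, then there is some β < κ and a graph homomorphism from G_β to G_{β+1}. -/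
/-!
By regularity of `κ`, the supremum `β` of the small set `I₀` is below `κ`, and so is `β + 1`.
The homomorphisms `G_β → G_α` for `α ∈ I₀` assemble into `G_β → ∏_{α ∈ I₀} G_α`; composing with
the given map into the full product and projecting to the coordinate `β + 1` gives
`G_β → G_{β+1}`.
-/

open Ordinal Cardinal

section GraphHom

variable {A B C : Type*} {EA : A → A → Prop} {EB : B → B → Prop} {EC : C → C → Prop}
  {ι : Type*} {X : ι → Type*} {EX : ∀ i, X i → X i → Prop}

theorem IsGraphHom.comp {g : B → C} {f : A → B} (hg : IsGraphHom EB EC g)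
    (hf : IsGraphHom EA EB f) : IsGraphHom EA EC (g ∘ f) :=
  fun v w hvw => hg _ _ (hf v w hvw)

theorem IsGraphHom.pi_lift {f : ∀ i, A → X i} (hf : ∀ i, IsGraphHom EA (EX i) (f i)) :
    IsGraphHom EA (fun x y => ∀ i, EX i (x i) (y i)) (fun a i => f i a) :=
  fun v w hvw i => hf i v w hvw

theorem isGraphHom_eval (i : ι) :
    IsGraphHom (fun x y : ∀ i, X i => ∀ i, EX i (x i) (y i)) (EX i) (fun x => x i) :=
  fun _ _ hxy => hxy i

theorem exists_isGraphHom_of_pi_hom {J : Type*} {Y : J → Type*}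
    {EY : ∀ j, Y j → Y j → Prop} (hA : ∀ i, ∃ f : A → X i, IsGraphHom EA (EX i) f)
    (hXY : ∃ h : (∀ i, X i) → (∀ j, Y j),
      IsGraphHom (fun x y => ∀ i, EX i (x i) (y i)) (fun x y => ∀ j, EY j (x j) (y j)) h)
    (j : J) : ∃ f : A → Y j, IsGraphHom EA (EY j) f := by
  choose f hf using hA
  obtain ⟨h, hh⟩ := hXY
  exact ⟨_, ((isGraphHom_eval j).comp hh).comp (IsGraphHom.pi_lift hf)⟩

end GraphHom

universe u

theorem Cardinal.IsRegular.sSup_lt_ord {κ : Cardinal.{u}} (hκ : κ.IsRegular)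
    {s : Set Ordinal.{u}} (hs : s ⊆ Set.Iio κ.ord) (hcard : #s < Cardinal.lift.{u + 1} κ) :
    sSup s < κ.ord :=
  sSup_lt_of_lt_cof (by rwa [← lift_cof, hκ.cof_ord]) hs

/-- Let `κ` be regular and `(G_α)_{α<κ}` a sequence of graphs with
homomorphisms `G_{α'} → G_α` for `α ≤ α' < κ`.  If some subproduct over an
index set `I₀ ⊆ κ` of size `< κ` admits a homomorphism into the full product
`∏_{α<κ} G_α`, then there are `β < κ` and a homomorphism `G_β → G_{β+1}`. -/
theorem exists_succ_hom_of_subproduct_hom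
    (κ : Cardinal.{0}) (hreg : κ.IsRegular)
    (G : Ordinal → Type) (E : ∀ α, G α → G α → Prop)
    (hback : ∀ α α' : Ordinal, α ≤ α' → α' < κ.ord →
      ∃ h : G α' → G α, IsGraphHom (E α') (E α) h)
    (I₀ : Set Ordinal) (hI₀ : I₀ ⊆ Set.Iio κ.ord) (hcard : #I₀ < Cardinal.lift.{1} κ)
    (hsub : ∃ h : (∀ α : I₀, G α) → (∀ α : {α : Ordinal // α < κ.ord}, G α),
      IsGraphHom
        (fun f g => ∀ α : I₀, E α (f α) (g α))
        (fun f g => ∀ α : {α : Ordinal // α < κ.ord}, E α (f α) (g α)) h) :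
    ∃ β : Ordinal, β < κ.ord ∧
      ∃ h : G β → G (β + 1), IsGraphHom (E β) (E (β + 1)) h := by
  have hβ : sSup I₀ < κ.ord := hreg.sSup_lt_ord hI₀ hcard
  have hle : ∀ α ∈ I₀, α ≤ sSup I₀ := fun α hα => le_csSup ⟨κ.ord, fun _ h => (hI₀ h).le⟩ hα
  have hsucc : sSup I₀ + 1 < κ.ord := by
    rw [← Order.succ_eq_add_one]
    exact (isSuccLimit_ord hreg.aleph0_le).succ_lt hβ
  exact ⟨_, hβ,
    exists_isGraphHom_of_pi_hom (fun α : I₀ => hback _ _ (hle α α.2) hβ) hsub ⟨_, hsucc⟩⟩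
end

section
/- Let U be a normal fine κ-complete ultrafilter on 𝒫_κ(X) where I ∪ ∏_{i∈I} G_i ⊆ X, and suppose that for U-almost every A there exist distinct f_A, g_A ∈ A ∩ ∏_{i∈I} G_i with f_A ↾ (A ∩ I) = g_A ↾ (A ∩ I). Then there exist distinct f, g ∈ ∏_{i∈I} G_i such that f ↾ (A ∩ I) = g ↾ (A ∩ I) for U-almost every A, yielding a contradiction with fineness of U. Hence for U-almost every A, the restriction map ρ_A : A ∩ ∏_{i ∈ I} G_i → ∏_{i ∈ A ∩ I} G_i, f ↦ f ↾ (A ∩ I), is injective. -/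
open Cardinal

/-- Let `U` be a normal fine `κ`-complete ultrafilter on `𝒫_κ(X)`, where
`X` contains (disjoint injective copies of) the index set `I` and the
product `∏_{i ∈ I} G_i` via `ι` and `π`.  If for `U`-almost every `A` there
are distinct `f_A, g_A ∈ A ∩ ∏_{i∈I} G_i` with
`f_A ↾ (A ∩ I) = g_A ↾ (A ∩ I)`, then there are distinct `f, g` in the
product with `f ↾ (A ∩ I) = g ↾ (A ∩ I)` for `U`-almost every `A`
(contradicting fineness); hence for `U`-almost every `A` the restriction map
`ρ_A : A ∩ ∏_{i ∈ I} G_i → ∏_{i ∈ A ∩ I} G_i` is injective. -/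
theorem restriction_map_ae_injective
    (X : Type) (I : Type) (G : I → Type) (κ : Cardinal.{0})
    (ι : I → X) (π : (∀ i, G i) → X)
    (hι : Function.Injective ι) (hπ : Function.Injective π)
    (U : Ultrafilter {A : Set X // #A < κ})
    (hfine : ∀ x : X, {A : {A : Set X // #A < κ} | x ∈ A.1} ∈ U)
    (hcomp : ∀ S : Set (Set {A : Set X // #A < κ}),
      #S < κ → (∀ s ∈ S, s ∈ U) → ⋂₀ S ∈ U)
    (hnormal : ∀ f : {A : Set X // #A < κ} → X,
      ∀ D ∈ U, (∀ A ∈ D, f A ∈ A.1) →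
        ∃ z : X, {A : {A : Set X // #A < κ} | f A = z} ∈ U) :
    (({A : {A : Set X // #A < κ} | ∃ f g : ∀ i, G i, f ≠ g ∧
        π f ∈ A.1 ∧ π g ∈ A.1 ∧ ∀ i, ι i ∈ A.1 → f i = g i} ∈ U) →
      ∃ f g : ∀ i, G i, f ≠ g ∧
        {A : {A : Set X // #A < κ} | ∀ i, ι i ∈ A.1 → f i = g i} ∈ U) ∧
    {A : {A : Set X // #A < κ} | ∀ f g : ∀ i, G i,
      π f ∈ A.1 → π g ∈ A.1 → (∀ i, ι i ∈ A.1 → f i = g i) → f = g} ∈ U := by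
  classical
  set P : {A : Set X // #A < κ} → Prop := fun A => ∃ f g : ∀ i, G i, f ≠ g ∧
      π f ∈ A.1 ∧ π g ∈ A.1 ∧ ∀ i, ι i ∈ A.1 → f i = g i with hPdef
  have key : ({A : {A : Set X // #A < κ} | P A} ∈ U) →
      ∃ f g : ∀ i, G i, f ≠ g ∧
        {A : {A : Set X // #A < κ} | ∀ i, ι i ∈ A.1 → f i = g i} ∈ U := by
    intro hD
    obtain ⟨A₁, hA₁⟩ := Ultrafilter.nonempty_of_mem hD
    have hX : Nonempty X := by
      obtain ⟨f, g, _, hf, _, _⟩ := hA₁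
      exact ⟨π f⟩
    set F : {A : Set X // #A < κ} → X :=
      fun A => if h : P A then π h.choose else Classical.arbitrary X with hF
    set Gfun : {A : Set X // #A < κ} → X :=
      fun A => if h : P A then π h.choose_spec.choose else Classical.arbitrary X with hG
    obtain ⟨z, hz⟩ := hnormal F {A | P A} hD (by
      intro A hA
      have hA' : P A := hA
      show (if h : P A then π h.choose else Classical.arbitrary X) ∈ A.1
      rw [dif_pos hA']
      exact hA'.choose_spec.choose_spec.2.1)
    obtain ⟨w, hw⟩ := hnormal Gfun {A | P A} hD (by
      intro A hA
      have hA' : P A := hA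
      show (if h : P A then π h.choose_spec.choose else Classical.arbitrary X) ∈ A.1
      rw [dif_pos hA']
      exact hA'.choose_spec.choose_spec.2.2.1)
    have hE : ({A : {A : Set X // #A < κ} | P A} ∩
        ({A | F A = z} ∩ {A | Gfun A = w})) ∈ U :=
      Filter.inter_mem hD (Filter.inter_mem hz hw)
    obtain ⟨A₀, hA₀P, hFz, hGw⟩ := Ultrafilter.nonempty_of_mem hE
    refine ⟨hA₀P.choose, hA₀P.choose_spec.choose,
      hA₀P.choose_spec.choose_spec.1, ?_⟩
    refine Filter.mem_of_superset hE ?_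
    rintro A ⟨hAP, hFz', hGw'⟩ i hi
    have hAP' : P A := hAP
    have hA₀P' : P A₀ := hA₀P
    have h1 : π hAP'.choose = π hA₀P'.choose := by
      have e1 : (if h : P A then π h.choose else Classical.arbitrary X) = z := hFz'
      have e2 : (if h : P A₀ then π h.choose else Classical.arbitrary X) = z := hFz
      rw [dif_pos hAP'] at e1
      rw [dif_pos hA₀P'] at e2
      exact e1.trans e2.symm
    have h2 : π hAP'.choose_spec.choose = π hA₀P'.choose_spec.choose := by
      have e1 : (if h : P A then π h.choose_spec.choose else Classical.arbitrary X) = w := hGw'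
      have e2 : (if h : P A₀ then π h.choose_spec.choose else Classical.arbitrary X) = w := hGw
      rw [dif_pos hAP'] at e1
      rw [dif_pos hA₀P'] at e2
      exact e1.trans e2.symm
    have hfeq := hπ h1
    have hgeq := hπ h2
    calc hA₀P'.choose i = hAP'.choose i := (congrFun hfeq i).symm
      _ = hAP'.choose_spec.choose i := hAP'.choose_spec.choose_spec.2.2.2 i hi
      _ = hA₀P'.choose_spec.choose i := congrFun hgeq i
  refine ⟨key, ?_⟩
  by_contra hcon
  have hcompl : {A : {A : Set X // #A < κ} | ∀ f g : ∀ i, G i,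
      π f ∈ A.1 → π g ∈ A.1 → (∀ i, ι i ∈ A.1 → f i = g i) → f = g}ᶜ ∈ U :=
    (Ultrafilter.compl_mem_iff_notMem).2 hcon
  have hD : {A : {A : Set X // #A < κ} | P A} ∈ U := by
    refine Filter.mem_of_superset hcompl ?_
    intro A hA
    simp only [Set.mem_compl_iff, Set.mem_setOf_eq] at hA ⊢
    push_neg at hA
    obtain ⟨f, g, hf, hg, hag, hne⟩ := hA
    exact ⟨f, g, hne, hf, hg, hag⟩
  obtain ⟨f, g, hfg, hag⟩ := key hD
  obtain ⟨i0, hi0⟩ := Function.ne_iff.1 hfg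
  obtain ⟨A, hA1, hA2⟩ := Ultrafilter.nonempty_of_mem
    (Filter.inter_mem hag (hfine (ι i0)))
  exact hi0 (hA1 i0 hA2)
end

section
/- Let κ be a cardinal such that for every set I of cardinality κ and every family of graphs (G_i)_{i∈I} with each |G_i| < κ, there is a normal fine κ-complete ultrafilter on 𝒫_κ(I ∪ ∏_{i∈I} G_i). Then for every such family there exist I₀ ⊆ I with |I₀| < κ and a graph homomorphism from ∏_{i ∈ I₀} G_i to ∏_{i ∈ I} G_i. -/
open Cardinal

/-- `U` is a fine ultrafilter on `𝒫_κ(X)`. -/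
def IsFineUF {X : Type} {κ : Cardinal.{0}}
    (U : Ultrafilter {A : Set X // #A < κ}) : Prop :=
  ∀ x : X, {A : {A : Set X // #A < κ} | x ∈ A.1} ∈ U

/-- `U` is a `κ`-complete ultrafilter on `𝒫_κ(X)`. -/
def IsKappaComplete {X : Type} (κ : Cardinal.{0})
    (U : Ultrafilter {A : Set X // #A < κ}) : Prop :=
  ∀ S : Set (Set {A : Set X // #A < κ}),
    #S < κ → (∀ s ∈ S, s ∈ U) → ⋂₀ S ∈ U

/-- `U` is a normal ultrafilter on `𝒫_κ(X)`: every choice function defined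
on a set in `U` is constant on a set in `U`. -/
def IsNormalUF {X : Type} {κ : Cardinal.{0}}
    (U : Ultrafilter {A : Set X // #A < κ}) : Prop :=
  ∀ f : {A : Set X // #A < κ} → X, ∀ D ∈ U, (∀ A ∈ D, f A ∈ A.1) →
    ∃ z : X, {A : {A : Set X // #A < κ} | f A = z} ∈ U

/-! For `U`-almost every `A`, take `I₀ = A ∩ I` and send `x ∈ ∏_{I₀} G` to a point of
`A ∩ ∏_I G` whose restriction to `I₀` is `x`. If this failed to be a homomorphism for almost
every `A`, pick bad pairs `x_A, y_A ∈ ∏_I G`. Since `|G i| < κ`, κ-completeness gives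
coordinatewise `U`-limits `g, g'`, which are adjacent by fineness. Normality shows that almost
always `x_A↾I₀ = g↾I₀`, `y_A↾I₀ = g'↾I₀`, and that `g` (resp. `g'`) is the only point of `A`
with this restriction; so the candidate map sends the bad pair to the adjacent pair `g, g'`. -/

open Filter Function Set

abbrev SmallSubsets (κ : Cardinal.{0}) (X : Type) : Type := {A : Set X // #A < κ}

section SmallSubsets

variable {X : Type} {κ : Cardinal.{0}} {U : Ultrafilter (SmallSubsets κ X)}

theorem IsKappaComplete.exists_eventually_eq (hU : IsKappaComplete κ U) {Y : Type}
    (hY : #Y < κ) (f : SmallSubsets κ X → Y) :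
    ∃ y, ∀ᶠ (A : SmallSubsets κ X) in U, f A = y := by
  by_contra! hne
  have hmem : ⋂₀ range (fun y => {A | f A ≠ y}) ∈ U :=
    hU _ (mk_range_le.trans_lt hY) (forall_mem_range.2 hne)
  have hempty : ⋂₀ range (fun y => {A | f A ≠ y}) = ∅ :=
    eq_empty_of_forall_notMem fun A hA => mem_sInter.1 hA _ ⟨f A, rfl⟩ rfl
  exact U.empty_notMem (hempty ▸ hmem)

theorem IsNormalUF.exists_eventually (hU : IsNormalUF U) {α : Type*} {e : α → X}
    (he : Injective e) {R : SmallSubsets κ X → α → Prop}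
    (h : ∀ᶠ (A : SmallSubsets κ X) in U, ∃ a, e a ∈ A.1 ∧ R A a) :
    ∃ a, ∀ᶠ (A : SmallSubsets κ X) in U, R A a := by
  classical
  obtain ⟨-, a₀, -⟩ := h.exists
  let f A := if hA : ∃ a, e a ∈ A.1 ∧ R A a then e hA.choose else e a₀
  have hf : ∀ A (hA : ∃ a, e a ∈ A.1 ∧ R A a), f A = e hA.choose := fun A hA => dif_pos hA
  obtain ⟨z, hz⟩ := hU f _ h fun A hA => (hf A hA).symm ▸ hA.choose_spec.1
  obtain ⟨A₁, hA₁, hzA₁⟩ := (h.and hz).exists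
  refine ⟨hA₁.choose, ?_⟩
  filter_upwards [h, hz] with A hA hzA
  have : hA.choose = hA₁.choose := he (by rw [← hf, ← hf, hzA, hzA₁])
  exact this ▸ hA.choose_spec.2

end SmallSubsets

def piAdj {ι : Type*} {G : ι → Type*} (E : ∀ i, G i → G i → Prop) (f g : ∀ i, G i) :
    Prop :=
  ∀ i, E i (f i) (g i)

section Subproducts

variable {I : Type} {G : I → Type} {κ : Cardinal.{0}}

theorem Set.domRestrict_surjective [Nonempty (∀ i, G i)] (s : Set I) :
    Surjective (s.domRestrict : (∀ i, G i) → ∀ i : s, G i) := by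
  classical
  obtain ⟨c⟩ := ‹Nonempty (∀ i, G i)›
  exact fun x =>
    ⟨fun i => if hi : i ∈ s then x ⟨i, hi⟩ else c i, funext fun i => dif_pos i.2⟩

theorem IsNormalUF.eventually_domRestrict_eq {β : Type}
    {U : Ultrafilter (SmallSubsets κ (I ⊕ β))} (hU : IsNormalUF U)
    {f : SmallSubsets κ (I ⊕ β) → ∀ i, G i} {g : ∀ i, G i}
    (h : ∀ i, ∀ᶠ (A : SmallSubsets κ (I ⊕ β)) in U, f A i = g i) :
    ∀ᶠ (A : SmallSubsets κ (I ⊕ β)) in U,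
      (Sum.inl ⁻¹' A.1).domRestrict (f A) = (Sum.inl ⁻¹' A.1).domRestrict g := by
  by_contra hne
  obtain ⟨i, hi⟩ := hU.exists_eventually Sum.inl_injective (R := fun A i => f A i ≠ g i) <| by
    filter_upwards [Ultrafilter.eventually_not.2 hne] with A hA
    obtain ⟨⟨i, hiA⟩, hne⟩ := Function.ne_iff.1 hA
    exact ⟨i, hiA, hne⟩
  obtain ⟨A, hA, hA'⟩ := ((h i).and hi).exists
  exact hA' hA

variable {U : Ultrafilter (SmallSubsets κ (I ⊕ (∀ i, G i)))}

theorem IsNormalUF.eventually_eq_of_domRestrict_eq (hU : IsNormalUF U) (hfine : IsFineUF U)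
    (g : ∀ i, G i) :
    ∀ᶠ (A : SmallSubsets κ (I ⊕ (∀ i, G i))) in U, Sum.inr g ∈ A.1 ∧
      ∀ g' : ∀ i, G i, Sum.inr g' ∈ A.1 →
        (Sum.inl ⁻¹' A.1).domRestrict g' = (Sum.inl ⁻¹' A.1).domRestrict g → g' = g := by
  refine Filter.Eventually.and (hfine (.inr g)) ?_
  by_contra hne
  obtain ⟨g', hg'⟩ := hU.exists_eventually Sum.inr_injective (R := fun A g' =>
      (Sum.inl ⁻¹' A.1).domRestrict g' = (Sum.inl ⁻¹' A.1).domRestrict g ∧ g' ≠ g) <| by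
    filter_upwards [Ultrafilter.eventually_not.2 hne] with A hA
    push Not at hA
    exact hA
  obtain ⟨i, hi⟩ := Function.ne_iff.1 hg'.exists.choose_spec.2
  obtain ⟨A, hA, hiA⟩ := (hg'.and (hfine (.inl i))).exists
  exact hi (congrFun hA.1 ⟨i, hiA⟩)

/-- The candidate homomorphism `∏_{A ∩ I} G → ∏_I G`; its value is arbitrary when no point
of `A` restricts to `x`. -/
noncomputable def extensionIn [Nonempty (∀ i, G i)] (A : Set (I ⊕ (∀ i, G i)))
    (x : ∀ i : (Sum.inl ⁻¹' A : Set I), G i) : ∀ i, G i :=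
  Classical.epsilon fun g => Sum.inr g ∈ A ∧ (Sum.inl ⁻¹' A).domRestrict g = x

theorem extensionIn_domRestrict [Nonempty (∀ i, G i)] {A : Set (I ⊕ (∀ i, G i))}
    {g : ∀ i, G i} (hg : Sum.inr g ∈ A)
    (huniq : ∀ g', Sum.inr g' ∈ A →
      (Sum.inl ⁻¹' A).domRestrict g' = (Sum.inl ⁻¹' A).domRestrict g → g' = g) :
    extensionIn A ((Sum.inl ⁻¹' A).domRestrict g) = g :=
  have hspec := Classical.epsilon_spec (p := fun g' => Sum.inr g' ∈ A ∧
    (Sum.inl ⁻¹' A).domRestrict g' = (Sum.inl ⁻¹' A).domRestrict g) ⟨g, hg, rfl⟩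
  huniq _ hspec.1 hspec.2

theorem eventually_isGraphHom_extensionIn [Nonempty (∀ i, G i)] (E : ∀ i, G i → G i → Prop)
    (hG : ∀ i, #(G i) < κ) (hfine : IsFineUF U) (hcomp : IsKappaComplete κ U)
    (hnorm : IsNormalUF U) :
    ∀ᶠ (A : SmallSubsets κ (I ⊕ (∀ i, G i))) in U,
      IsGraphHom (piAdj fun i : (Sum.inl ⁻¹' A.1 : Set I) => E i) (piAdj E)
        (extensionIn A.1) := by
  by_contra hbad
  have hbadPair : ∀ᶠ (A : SmallSubsets κ (I ⊕ (∀ i, G i))) in U,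
      ∃ p : (∀ i, G i) × (∀ i, G i), (∀ i ∈ Sum.inl ⁻¹' A.1, E i (p.1 i) (p.2 i)) ∧
        ¬ piAdj E (extensionIn A.1 ((Sum.inl ⁻¹' A.1).domRestrict p.1))
          (extensionIn A.1 ((Sum.inl ⁻¹' A.1).domRestrict p.2)) := by
    filter_upwards [Ultrafilter.eventually_not.2 hbad] with A hA
    simp only [IsGraphHom, not_forall] at hA
    obtain ⟨x, y, hxy, hne⟩ := hA
    obtain ⟨x, rfl⟩ := domRestrict_surjective _ x
    obtain ⟨y, rfl⟩ := domRestrict_surjective _ y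
    exact ⟨(x, y), fun i hi => hxy ⟨i, hi⟩, hne⟩
  obtain ⟨p, hp⟩ := hbadPair.choice
  choose gx hgx using fun i => hcomp.exists_eventually_eq (hG i) fun A => (p A).1 i
  choose gy hgy using fun i => hcomp.exists_eventually_eq (hG i) fun A => (p A).2 i
  have hadj : piAdj E gx gy := fun i => by
    obtain ⟨A, ⟨⟨hpA, hiA⟩, hx⟩, hy⟩ :=
      (((hp.and (hfine (.inl i))).and (hgx i)).and (hgy i)).exists
    exact hx ▸ hy ▸ hpA.1 i hiA
  obtain ⟨A, ⟨⟨⟨hpA, hrx⟩, hry⟩, hux⟩, huy⟩ :=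
    ((((hp.and (hnorm.eventually_domRestrict_eq hgx)).and
      (hnorm.eventually_domRestrict_eq hgy)).and
        (hnorm.eventually_eq_of_domRestrict_eq hfine gx)).and
          (hnorm.eventually_eq_of_domRestrict_eq hfine gy)).exists
  apply hpA.2
  rwa [hrx, hry, extensionIn_domRestrict hux.1 hux.2, extensionIn_domRestrict huy.1 huy.2]

theorem eventually_exists_isGraphHom (E : ∀ i, G i → G i → Prop) (hG : ∀ i, #(G i) < κ)
    (hfine : IsFineUF U) (hcomp : IsKappaComplete κ U) (hnorm : IsNormalUF U) :
    ∀ᶠ (A : SmallSubsets κ (I ⊕ (∀ i, G i))) in U,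
      ∃ h : (∀ i : (Sum.inl ⁻¹' A.1 : Set I), G i) → ∀ i, G i,
        IsGraphHom (piAdj fun i : (Sum.inl ⁻¹' A.1 : Set I) => E i) (piAdj E) h := by
  by_cases hne : Nonempty (∀ i, G i)
  · filter_upwards [eventually_isGraphHom_extensionIn E hG hfine hcomp hnorm] with A hA
    exact ⟨_, hA⟩
  · obtain ⟨i, hi⟩ := isEmpty_pi.1 (not_nonempty_iff.1 hne)
    filter_upwards [hfine (.inl i)] with A hiA
    exact ⟨fun x => isEmptyElim (x ⟨i, hiA⟩), fun x => isEmptyElim (x ⟨i, hiA⟩)⟩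

end Subproducts

/-- If for every set `I` of cardinality `κ` and every family of graphs
`(G_i)_{i ∈ I}` with each `|G_i| < κ` there is a normal fine `κ`-complete
ultrafilter on `𝒫_κ(I ∪ ∏_{i∈I} G_i)`, then for every such family there is
an index set `I₀ ⊆ I` with `|I₀| < κ` and a graph homomorphism from
`∏_{i ∈ I₀} G_i` to `∏_{i ∈ I} G_i`. -/
theorem subproduct_hom_of_normal_ultrafilter
    (κ : Cardinal.{0})
    (hU : ∀ (I : Type) (G : I → Type), #I = κ → (∀ i, #(G i) < κ) →
      ∃ U : Ultrafilter {A : Set (I ⊕ (∀ i, G i)) // #A < κ},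
        IsFineUF U ∧ IsKappaComplete κ U ∧ IsNormalUF U) :
    ∀ (I : Type) (G : I → Type) (E : ∀ i, G i → G i → Prop),
      #I = κ → (∀ i, #(G i) < κ) →
      ∃ I₀ : Set I, #I₀ < κ ∧
        ∃ h : (∀ i : I₀, G i) → (∀ i, G i),
          IsGraphHom
            (fun f g : ∀ i : I₀, G i => ∀ i : I₀, E i (f i) (g i))
            (fun f g : ∀ i, G i => ∀ i, E i (f i) (g i)) h := by
  intro I G E hI hG
  obtain ⟨U, hfine, hcomp, hnorm⟩ := hU I G hI hG
  obtain ⟨A, hA⟩ := (eventually_exists_isGraphHom E hG hfine hcomp hnorm).exists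
  exact ⟨Sum.inl ⁻¹' A.1, (mk_preimage_of_injective _ _ Sum.inl_injective).trans_lt A.2, hA⟩
end

section
/- Let λ be an ordinal and let h : V_λ → V_λ be a function such that rank(h(x)) ≤ rank(x) for all x ∈ V_λ and such that for all x, y ∈ V_λ, x ∈ y if and only if h(x) ∈ h(y). Then h is the identity function on V_λ. -/
/-- A function `h : V_λ → V_λ` (formalized as a map on `ZFSet` restricted to
sets of rank `< λ`) which does not increase rank and which preserves both
`∈` and `∉` is the identity on `V_λ`. -/
theorem eq_id_of_rank_le_and_mem_iff (lam : Ordinal.{0}) (h : ZFSet.{0} → ZFSet.{0})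
    (hrank : ∀ x : ZFSet, x.rank < lam → (h x).rank ≤ x.rank)
    (hmem : ∀ x y : ZFSet, x.rank < lam → y.rank < lam → (x ∈ y ↔ h x ∈ h y)) :
    ∀ x : ZFSet, x.rank < lam → h x = x := by
  suffices H : ∀ o : Ordinal, ∀ x : ZFSet, x.rank ≤ o → x.rank < lam → h x = x by
    intro x hx; exact H x.rank x le_rfl hx
  intro o
  induction o using Ordinal.induction with
  | _ o IH =>
    intro x hxo hxl
    ext z
    constructor
    · intro hz
      have hzr : z.rank < x.rank :=
        lt_of_lt_of_le (ZFSet.rank_lt_of_mem hz) (hrank x hxl)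
      have hzl : z.rank < lam := hzr.trans hxl
      have hzfix : h z = z := IH z.rank (lt_of_lt_of_le hzr hxo) z le_rfl hzl
      have : h z ∈ h x := by rwa [hzfix]
      exact (hmem z x hzl hxl).mpr this
    · intro hz
      have hzr : z.rank < x.rank := ZFSet.rank_lt_of_mem hz
      have hzl : z.rank < lam := hzr.trans hxl
      have hzfix : h z = z := IH z.rank (lt_of_lt_of_le hzr hxo) z le_rfl hzl
      have := (hmem z x hzl hxl).mp hz
      rwa [hzfix] at this
end
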